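/- arXiv:2402.07096 — 4 statements merged into one kernel-verified Lean document; each statement's English description precedes it below -/
import Mathlib

section
/- Let R be a supercommutative superring that is a superdomain and a unique factorization superring (UFSR). Then R is a local ring whose unique maximal ideal is the canonical superideal 𝒥: for every x : R, IsUnit x ↔ x ∉ 𝒥. In particular the quotient R/𝒥 is a field, i.e. R is a superfield. (Theorem 3.3 i of the paper.) -/
/-! Basic notions for supercommutative superrings, following the paper
"A note on unique factorization in superrings". -/

section Defs

variable {R : Type*} [Ring R]

/-- `a` divides `b`: `b = c * a * d` for some `c, d`. -/
def SDvd (a b : R) : Prop := ∃ c d : R, b = c * a * d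

/-- `a` is associated to `b`: `a = u * b * v` for units `u, v`. -/
def SAssociated (a b : R) : Prop := ∃ u v : Rˣ, a = (u : R) * b * (v : R)

/-- `a` is normal: `aR = Ra` as sets. -/
def SNormal (a : R) : Prop :=
  {x : R | ∃ r : R, x = a * r} = {x : R | ∃ r : R, x = r * a}

/-- `a` is irreducible: a non-unit which is not a product of two non-units. -/
def SIrreducible (a : R) : Prop :=
  ¬ IsUnit a ∧ ∀ b c : R, a = b * c → IsUnit b ∨ IsUnit c

/-- `R` is a unique factorization superring: every nonzero non-unit admits a
factorization into normal irreducible elements, uniquely up to order and associates. -/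
def IsUFSR (R : Type*) [Ring R] : Prop :=
  (∀ x : R, x ≠ 0 → ¬ IsUnit x →
      ∃ (d : ℕ) (f : Fin d → R),
        (∀ i, SNormal (f i) ∧ SIrreducible (f i)) ∧ x = (List.ofFn f).prod) ∧
  (∀ x : R, x ≠ 0 → ¬ IsUnit x →
      ∀ (d n : ℕ) (f : Fin d → R) (g : Fin n → R),
        (∀ i, SNormal (f i) ∧ SIrreducible (f i)) →
        (∀ i, SNormal (g i) ∧ SIrreducible (g i)) →
        x = (List.ofFn f).prod → x = (List.ofFn g).prod →
        ∃ h : d = n, ∃ σ : Equiv.Perm (Fin n),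
          ∀ i : Fin n, SAssociated (f (Fin.cast h.symm i)) (g (σ i)))

end Defs

/-- The supercommutativity condition for a `ℤ₂`-grading `𝒜` on `R`. -/
def SuperComm {R : Type*} [Ring R] (𝒜 : ZMod 2 → AddSubgroup R) : Prop :=
  ∀ (i j : ZMod 2), ∀ x ∈ 𝒜 i, ∀ y ∈ 𝒜 j,
    x * y = ((-1 : ℤ) ^ (i.val * j.val)) • (y * x)

/-- `2` is a non-zerodivisor in `R`. -/
def TwoRegular (R : Type*) [Ring R] : Prop := ∀ x : R, 2 * x = 0 → x = 0

/-- The canonical superideal `𝒥 = R·R₁`, the (two-sided, by supercommutativity)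
ideal generated by the odd part. -/
def canonicalSuperideal {R : Type*} [Ring R] (𝒜 : ZMod 2 → AddSubgroup R) : Ideal R :=
  Ideal.span (𝒜 1 : Set R)

/-- `R` is a superdomain: `𝒥` is a proper completely prime ideal. -/
def IsSuperdomain {R : Type*} [Ring R] (𝒜 : ZMod 2 → AddSubgroup R) : Prop :=
  (1 : R) ∉ canonicalSuperideal 𝒜 ∧
    ∀ a b : R, a * b ∈ canonicalSuperideal 𝒜 →
      a ∈ canonicalSuperideal 𝒜 ∨ b ∈ canonicalSuperideal 𝒜

section Auxiliary

variable {R : Type*} [Ring R]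

theorem SNormal.mul_left' {a : R} (h : SNormal a) (r : R) : ∃ s, a * r = s * a := by
  have hx : (a * r) ∈ {x : R | ∃ r : R, x = a * r} := ⟨r, rfl⟩
  rw [h] at hx
  exact hx

theorem SNormal.mul_right' {a : R} (h : SNormal a) (r : R) : ∃ s, r * a = a * s := by
  have hx : (r * a) ∈ {x : R | ∃ r : R, x = r * a} := ⟨r, rfl⟩
  rw [← h] at hx
  exact hx

theorem snormal_unit_mul {p : R} (hp : SNormal p) (u : Rˣ) : SNormal ((u : R) * p) := by
  ext x
  simp only [Set.mem_setOf_eq]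
  constructor
  · rintro ⟨r, rfl⟩
    obtain ⟨s, hs⟩ := hp.mul_left' r
    refine ⟨(u : R) * s * (↑u⁻¹ : R), ?_⟩
    rw [mul_assoc (u : R) p r, hs]
    simp [mul_assoc]
  · rintro ⟨r, rfl⟩
    obtain ⟨c, hc⟩ := hp.mul_right' (↑u⁻¹ : R)
    obtain ⟨s, hs⟩ := hp.mul_right' (r * (u : R))
    refine ⟨c * s, ?_⟩
    have h1 : (u : R) * (p * c) = p := by rw [← hc, Units.mul_inv_cancel_left]
    calc r * ((u : R) * p) = (r * (u : R)) * p := (mul_assoc _ _ _).symm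
      _ = p * s := hs
      _ = ((u : R) * (p * c)) * s := by rw [h1]
      _ = (u : R) * p * (c * s) := by simp [mul_assoc]

theorem sirreducible_unit_mul {p : R} (hp : SIrreducible p) (u : Rˣ) :
    SIrreducible ((u : R) * p) := by
  constructor
  · intro h
    have := (u⁻¹.isUnit).mul h
    rw [Units.inv_mul_cancel_left] at this
    exact hp.1 this
  · intro b c h
    have hpbc : p = ((↑u⁻¹ : R) * b) * c := by
      rw [mul_assoc, ← h, Units.inv_mul_cancel_left]
    rcases hp.2 _ _ hpbc with hb | hc
    · left
      have := u.isUnit.mul hb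
      rwa [Units.mul_inv_cancel_left] at this
    · right; exact hc

theorem isUnit_of_isUnit_sq {f : R} (h : IsUnit (f * f)) : IsUnit f := by
  obtain ⟨w, hw⟩ := h
  have h1 : f * (f * (↑w⁻¹ : R)) = 1 := by
    rw [← mul_assoc, ← hw, Units.mul_inv]
  have h2 : ((↑w⁻¹ : R) * f) * f = 1 := by
    rw [mul_assoc, ← hw, Units.inv_mul]
  have h3 : ((↑w⁻¹ : R) * f) = f * (↑w⁻¹ : R) := by
    calc (↑w⁻¹ : R) * f = ((↑w⁻¹ : R) * f) * (f * (f * (↑w⁻¹ : R))) := by rw [h1, mul_one]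
      _ = (((↑w⁻¹ : R) * f) * f) * (f * (↑w⁻¹ : R)) := by simp [mul_assoc]
      _ = f * (↑w⁻¹ : R) := by rw [h2, one_mul]
  exact ⟨⟨f, f * (↑w⁻¹ : R), h1, by rw [← h3]; exact h2⟩, rfl⟩

theorem zmod2_cases : ∀ i : ZMod 2, i = 0 ∨ i = 1 := by decide

section Graded

variable (𝒜 : ZMod 2 → AddSubgroup R) [GradedRing 𝒜]

theorem odd_mul_comm (hsc : SuperComm 𝒜) {θ : R} (hθ : θ ∈ 𝒜 1) (x : R) :
    (∃ y, x * θ = θ * y) ∧ (∃ y, θ * x = y * θ) := by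
  induction x using DirectSum.Decomposition.inductionOn 𝒜 with
  | zero => exact ⟨⟨0, by simp⟩, ⟨0, by simp⟩⟩
  | homogeneous m =>
    rename_i i
    obtain hi | hi := zmod2_cases i <;> subst hi
    · have h := hsc 0 1 (↑m) m.2 θ hθ
      rw [show ((0 : ZMod 2).val * (1 : ZMod 2).val) = 0 from rfl, pow_zero, one_zsmul] at h
      exact ⟨⟨↑m, h⟩, ⟨↑m, h.symm⟩⟩
    · have h := hsc 1 1 (↑m) m.2 θ hθ
      rw [show ((1 : ZMod 2).val * (1 : ZMod 2).val) = 1 from rfl, pow_one, neg_one_zsmul] at h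
      refine ⟨⟨-↑m, by rw [h, mul_neg]⟩, ⟨-↑m, by rw [neg_mul, h, neg_neg]⟩⟩
  | add a b ha hb =>
    obtain ⟨⟨y1, hy1⟩, ⟨z1, hz1⟩⟩ := ha
    obtain ⟨⟨y2, hy2⟩, ⟨z2, hz2⟩⟩ := hb
    exact ⟨⟨y1 + y2, by rw [add_mul, hy1, hy2, mul_add]⟩,
           ⟨z1 + z2, by rw [mul_add, hz1, hz2, add_mul]⟩⟩

theorem odd_sq (hsc : SuperComm 𝒜) (h2 : TwoRegular R) {θ : R} (hθ : θ ∈ 𝒜 1) :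
    θ * θ = 0 := by
  have h := hsc 1 1 θ hθ θ hθ
  rw [show ((1 : ZMod 2).val * (1 : ZMod 2).val) = 1 from rfl, pow_one, neg_one_zsmul] at h
  refine h2 _ ?_
  rw [two_mul]
  nth_rewrite 1 [h]
  exact neg_add_cancel _

theorem odd_sandwich (hsc : SuperComm 𝒜) (h2 : TwoRegular R) {θ : R} (hθ : θ ∈ 𝒜 1)
    (x : R) : θ * x * θ = 0 := by
  obtain ⟨⟨y, hy⟩, -⟩ := odd_mul_comm 𝒜 hsc hθ x
  rw [mul_assoc, hy, ← mul_assoc, odd_sq 𝒜 hsc h2 hθ, zero_mul]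

theorem J_mul_mem (hsc : SuperComm 𝒜) {a : R} (ha : a ∈ canonicalSuperideal 𝒜) (r : R) :
    a * r ∈ canonicalSuperideal 𝒜 := by
  induction ha using Submodule.span_induction with
  | mem θ hθ =>
    obtain ⟨-, ⟨y, hy⟩⟩ := odd_mul_comm 𝒜 hsc hθ r
    rw [hy]
    exact Ideal.mul_mem_left _ y (Ideal.subset_span hθ)
  | zero => rw [zero_mul]; exact Ideal.zero_mem _
  | add x y _ _ hx hy => rw [add_mul]; exact Ideal.add_mem _ hx hy
  | smul c x _ hx => rw [smul_eq_mul, mul_assoc]; exact Ideal.mul_mem_left _ _ hx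

theorem unit_not_mem_J (hdom : IsSuperdomain 𝒜) {x : R} (hx : IsUnit x) :
    x ∉ canonicalSuperideal 𝒜 := by
  intro hmem
  obtain ⟨u, rfl⟩ := hx
  have := Ideal.mul_mem_left _ (↑u⁻¹ : R) hmem
  rw [Units.inv_mul] at this
  exact hdom.1 this

theorem assoc_mem_J (hsc : SuperComm 𝒜) {a b : R} (h : SAssociated a b)
    (hb : b ∈ canonicalSuperideal 𝒜) : a ∈ canonicalSuperideal 𝒜 := by
  obtain ⟨u, v, rfl⟩ := h
  exact J_mul_mem 𝒜 hsc (Ideal.mul_mem_left _ _ hb) _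

theorem prod_mem_J (hsc : SuperComm 𝒜) {l : List R} {y : R} (hy : y ∈ l)
    (hyJ : y ∈ canonicalSuperideal 𝒜) : l.prod ∈ canonicalSuperideal 𝒜 := by
  induction l with
  | nil => simp at hy
  | cons a l ih =>
    rw [List.prod_cons]
    rcases List.mem_cons.mp hy with rfl | h
    · exact J_mul_mem 𝒜 hsc hyJ _
    · exact Ideal.mul_mem_left _ _ (ih h)

theorem exists_mem_J_of_prod (hdom : IsSuperdomain 𝒜) :
    ∀ {l : List R}, l.prod ∈ canonicalSuperideal 𝒜 → ∃ y ∈ l, y ∈ canonicalSuperideal 𝒜 := by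
  intro l
  induction l with
  | nil => intro h; rw [List.prod_nil] at h; exact absurd h hdom.1
  | cons a l ih =>
    intro h
    rw [List.prod_cons] at h
    rcases hdom.2 _ _ h with h1 | h2
    · exact ⟨a, List.mem_cons_self, h1⟩
    · obtain ⟨y, hy, hyJ⟩ := ih h2
      exact ⟨y, List.mem_cons_of_mem _ hy, hyJ⟩

end Graded

theorem sandwich_pow_eq_zero {t b : R} (ht : ∀ x, t * x * t = 0) {m : ℕ}
    (hb : b ^ m = 0) : (b + t) ^ (m + m) = 0 := by
  set T := AddSubgroup.closure {x : R | ∃ a c, x = a * t * c} with hT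
  have hmemT : ∀ a c : R, a * t * c ∈ T := fun a c => AddSubgroup.subset_closure ⟨a, c, rfl⟩
  have hmulT : ∀ r : R, ∀ τ ∈ T, r * τ ∈ T ∧ τ * r ∈ T := by
    intro r τ hτ
    refine AddSubgroup.closure_induction (fun x hx => ?_) ?_
      (fun x y hx hy ihx ihy => ?_) (fun x hx ih => ?_) hτ
    · obtain ⟨a, c, rfl⟩ := hx
      constructor
      · rw [← mul_assoc, ← mul_assoc]; exact hmemT (r * a) c
      · rw [mul_assoc]; exact hmemT a (c * r)
    · constructor <;> simp [zero_mem]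
    · obtain ⟨ih1, ih2⟩ := ihx
      obtain ⟨ih1', ih2'⟩ := ihy
      exact ⟨by rw [mul_add]; exact add_mem ih1 ih1', by rw [add_mul]; exact add_mem ih2 ih2'⟩
    · obtain ⟨ih1, ih2⟩ := ih
      exact ⟨by rw [mul_neg]; exact neg_mem ih1, by rw [neg_mul]; exact neg_mem ih2⟩
  have hTT : ∀ τ ∈ T, ∀ τ' ∈ T, τ * τ' = (0 : R) := by
    intro τ hτ
    refine AddSubgroup.closure_induction (fun x hx => ?_) ?_
      (fun x y hx hy ihx ihy => ?_) (fun x hx ih => ?_) hτ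
    · obtain ⟨a, c, rfl⟩ := hx
      intro τ' hτ'
      refine AddSubgroup.closure_induction (fun x' hx' => ?_) ?_
        (fun x' y' hx' hy' ihx' ihy' => ?_) (fun x' hx' ih' => ?_) hτ'
      · obtain ⟨a', c', rfl⟩ := hx'
        calc a * t * c * (a' * t * c') = a * (t * (c * a') * t) * c' := by
              simp [mul_assoc]
          _ = 0 := by rw [ht (c * a'), mul_zero, zero_mul]
      · rw [mul_zero]
      · rw [mul_add, ihx', ihy', add_zero]
      · rw [mul_neg, ih', neg_zero]
    · intro τ' _; rw [zero_mul]
    · intro τ' hτ'; rw [add_mul, ihx τ' hτ', ihy τ' hτ', add_zero]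
    · intro τ' hτ'; rw [neg_mul, ih τ' hτ', neg_zero]
  have hpow : ∀ k : ℕ, ∃ τ ∈ T, (b + t) ^ k = b ^ k + τ := by
    intro k
    induction k with
    | zero => exact ⟨0, zero_mem _, by simp⟩
    | succ k ih =>
      obtain ⟨τ, hτ, hk⟩ := ih
      refine ⟨b ^ k * t + (τ * b + τ * t), ?_, ?_⟩
      · refine add_mem ?_ (add_mem (hmulT b τ hτ).2 (hmulT t τ hτ).2)
        have := hmemT (b ^ k) 1
        rwa [mul_one] at this
      · rw [pow_succ, hk, add_mul, mul_add, mul_add, pow_succ]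
        abel
  obtain ⟨τ, hτT, hs⟩ := hpow m
  rw [pow_add, hs, hb, zero_add]
  exact hTT τ hτT τ hτT

theorem mem_J_nilpotent (𝒜 : ZMod 2 → AddSubgroup R) [GradedRing 𝒜]
    (hsc : SuperComm 𝒜) (h2 : TwoRegular R) {a : R}
    (ha : a ∈ canonicalSuperideal 𝒜) : ∃ N, a ^ (N + 1) = 0 := by
  have key : ∀ (n : ℕ) (c v : Fin n → R), (∀ i, v i ∈ 𝒜 1) →
      ∃ N, (∑ i, c i * v i) ^ (N + 1) = 0 := by
    intro n
    induction n with
    | zero => intro c v _; exact ⟨0, by simp⟩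
    | succ n ih =>
      intro c v hv
      obtain ⟨N, hN⟩ := ih (fun i => c i.succ) (fun i => v i.succ) (fun i => hv _)
      set b := ∑ i : Fin n, c i.succ * v i.succ with hbs
      set t := c 0 * v 0 with hts
      have ht : ∀ x, t * x * t = 0 := by
        intro x
        have h := odd_sandwich 𝒜 hsc h2 (hv 0) (x * c 0)
        calc t * x * t = c 0 * (v 0 * (x * c 0) * v 0) := by
              rw [hts]; simp [mul_assoc]
          _ = 0 := by rw [h, mul_zero]
      have hbt := sandwich_pow_eq_zero ht hN
      refine ⟨N + N + 1, ?_⟩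
      rw [Fin.sum_univ_succ, ← hts, ← hbs, show t + b = b + t from add_comm t b,
        show N + N + 1 + 1 = (N + 1) + (N + 1) from by omega]
      exact hbt
  rw [canonicalSuperideal] at ha
  obtain ⟨n, c, v, hsum⟩ := Submodule.mem_span_set'.mp ha
  obtain ⟨N, hN⟩ := key n c (fun i => ↑(v i)) (fun i => (v i).2)
  refine ⟨N, ?_⟩
  have hav : a = ∑ i, c i * ↑(v i) := by
    rw [← hsum]
    simp [smul_eq_mul]
  rw [hav]
  exact hN

theorem ofFn_cons_prod {n : ℕ} (a : R) (g : Fin n → R) :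
    (List.ofFn (Fin.cons a g)).prod = a * (List.ofFn g).prod := by
  rw [List.ofFn_succ]
  simp

theorem ofFn_append_prod {m n : ℕ} (A : Fin m → R) (B : Fin n → R) :
    (List.ofFn (Fin.append A B)).prod = (List.ofFn A).prod * (List.ofFn B).prod := by
  rw [List.ofFn_fin_append, List.prod_append]

theorem ofFn_const_prod (n : ℕ) (p : R) :
    (List.ofFn (fun _ : Fin n => p)).prod = p ^ n := by
  rw [List.ofFn_const, List.prod_replicate]

theorem ofFn_one_prod (A : Fin 1 → R) : (List.ofFn A).prod = A 0 := by
  simp [List.ofFn_succ]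

theorem forall_cons_pred {P : R → Prop} {n : ℕ} {a : R} {g : Fin n → R}
    (ha : P a) (hg : ∀ i, P (g i)) :
    ∀ i, P ((Fin.cons a g : Fin (n+1) → R) i) := by
  intro i
  by_cases hi : i = 0
  · rw [hi, Fin.cons_zero]; exact ha
  · obtain ⟨j, rfl⟩ : ∃ j : Fin n, i = j.succ := ⟨i.pred hi, (Fin.succ_pred i hi).symm⟩
    rw [Fin.cons_succ]; exact hg j

theorem forall_append_pred {P : R → Prop} {m n : ℕ} {A : Fin m → R} {B : Fin n → R}
    (hA : ∀ i, P (A i)) (hB : ∀ i, P (B i)) : ∀ i, P (Fin.append A B i) := fun i =>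
  Fin.addCases (fun j => by rw [Fin.append_left]; exact hA j)
    (fun j => by rw [Fin.append_right]; exact hB j) i

theorem append_eval_lt {α : Type*} {m n : ℕ} (A : Fin m → α) (B : Fin n → α)
    {j : Fin (m + n)} (hj : (j : ℕ) < m) : Fin.append A B j = A ⟨j, hj⟩ := by
  have hje : j = Fin.castAdd n ⟨(j : ℕ), hj⟩ := by
    apply Fin.ext; simp
  conv_lhs => rw [hje]
  rw [Fin.append_left]

theorem append_eval_ge {α : Type*} {m n : ℕ} (A : Fin m → α) (B : Fin n → α)
    {j : Fin (m + n)} (hj : ¬ (j : ℕ) < m) :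
    Fin.append A B j = B ⟨(j : ℕ) - m, by have := j.isLt; omega⟩ := by
  have hje : j = Fin.natAdd m ⟨(j : ℕ) - m, by have := j.isLt; omega⟩ := by
    apply Fin.ext; simp; omega
  conv_lhs => rw [hje]
  rw [Fin.append_right]

end Auxiliary
/-- **Theorem 3.3 i)**: a unique factorization superdomain is local with unique
maximal ideal the canonical superideal `𝒥`; in particular it is a superfield. -/
theorem ufsr_superdomain_isLocal_with_max_ideal_J
    {R : Type*} [Ring R] [Nontrivial R]
    (𝒜 : ZMod 2 → AddSubgroup R) [GradedRing 𝒜]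
    (hsc : SuperComm 𝒜) (h2 : TwoRegular R) (hodd : 𝒜 1 ≠ ⊥)
    (hdom : IsSuperdomain 𝒜) (hufsr : IsUFSR R) :
    ∀ x : R, IsUnit x ↔ x ∉ canonicalSuperideal 𝒜 := by
  classical
  -- a nonzero odd element
  obtain ⟨θ, hθmem, hθ0⟩ : ∃ θ ∈ 𝒜 1, θ ≠ 0 := by
    by_contra hc
    push_neg at hc
    exact hodd ((AddSubgroup.eq_bot_iff_forall _).mpr hc)
  have hθJ : θ ∈ canonicalSuperideal 𝒜 := Ideal.subset_span hθmem
  have hθU : ¬ IsUnit θ := fun h => unit_not_mem_J 𝒜 hdom h hθJ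
  -- a normal irreducible element of J
  obtain ⟨m, g, hg, hθeq⟩ := hufsr.1 θ hθ0 hθU
  obtain ⟨y, hyl, hyJ⟩ := exists_mem_J_of_prod 𝒜 hdom (hθeq ▸ hθJ)
  obtain ⟨iy, rfl⟩ := List.mem_ofFn.mp hyl
  set p := g iy with hpdef
  have hpN : SNormal p := (hg iy).1
  have hpI : SIrreducible p := (hg iy).2
  have hpJ : p ∈ canonicalSuperideal 𝒜 := hyJ
  have hp0 : p ≠ 0 := by
    intro h
    exact hθ0 (by rw [hθeq]; exact List.prod_eq_zero (List.mem_ofFn.mpr ⟨iy, h⟩))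
  -- find a square-zero power of p
  obtain ⟨N0, hN0⟩ := mem_J_nilpotent 𝒜 hsc h2 hpJ
  have hex : ∃ N, p ^ N = 0 := ⟨N0 + 1, hN0⟩
  have hnn0 : p ^ (Nat.find hex) = 0 := Nat.find_spec hex
  have hne0 : Nat.find hex ≠ 0 := by
    intro h; rw [h, pow_zero] at hnn0; exact one_ne_zero hnn0
  have hne1 : Nat.find hex ≠ 1 := by
    intro h; rw [h, pow_one] at hnn0; exact hp0 hnn0
  obtain ⟨j, hjn⟩ : ∃ j, Nat.find hex = j + 2 := ⟨Nat.find hex - 2, by omega⟩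
  set k := j + 1 with hk
  set π := p ^ k with hπ
  have hπ0 : π ≠ 0 := Nat.find_min hex (show k < Nat.find hex by omega)
  have hπJ : π ∈ canonicalSuperideal 𝒜 := by
    rw [hπ, hk, pow_succ]
    exact Ideal.mul_mem_left _ _ hpJ
  have hππ : π * π = 0 := by
    rw [hπ, ← pow_add, show k + k = Nat.find hex + j from by omega, pow_add, hnn0, zero_mul]
  have hπU : ¬ IsUnit π := fun h => unit_not_mem_J 𝒜 hdom h hπJ
  have hassocp : ∀ {y : R}, SAssociated y p → y ∈ canonicalSuperideal 𝒜 :=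
    fun h => assoc_mem_J 𝒜 hsc h hpJ
  -- the statement
  intro x
  constructor
  · intro hx; exact unit_not_mem_J 𝒜 hdom hx
  intro hxJ
  by_contra hxU
  have hx0 : x ≠ 0 := fun h => hxJ (h ▸ (canonicalSuperideal 𝒜).zero_mem)
  obtain ⟨d, F, hF, hxeq⟩ := hufsr.1 x hx0 hxU
  have hFJ : ∀ i, F i ∉ canonicalSuperideal 𝒜 := by
    intro i hi
    exact hxJ (hxeq ▸ prod_mem_J 𝒜 hsc (List.mem_ofFn.mpr ⟨i, rfl⟩) hi)
  have hd0 : d ≠ 0 := by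
    intro h
    subst h
    rw [List.ofFn_zero, List.prod_nil] at hxeq
    exact hxU (hxeq ▸ isUnit_one)
  set f := F ⟨0, Nat.pos_of_ne_zero hd0⟩ with hfdef
  have hfN : SNormal f := (hF _).1
  have hfI : SIrreducible f := (hF _).2
  have hfJ : f ∉ canonicalSuperideal 𝒜 := hFJ _
  have hfU : ¬ IsUnit f := hfI.1
  -- the key obstruction: f cannot be associated to f + π
  have keyW : ¬ SAssociated f (f + π) := by
    rintro ⟨u, v, huv⟩
    have h1 : (↑u⁻¹ : R) * f * ↑v⁻¹ = f + π := by
      conv_lhs => rw [huv]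
      simp only [← mul_assoc]
      rw [Units.inv_mul, one_mul, mul_assoc, Units.mul_inv, mul_one]
    have hπeq : π = (↑u⁻¹ : R) * f * ↑v⁻¹ - f := by rw [h1]; abel
    obtain ⟨s, hs⟩ := hfN.mul_left' (↑v⁻¹ : R)
    have hπw : π = ((↑u⁻¹ : R) * s - 1) * f := by
      rw [hπeq, mul_assoc, hs, ← mul_assoc, sub_mul, one_mul]
    by_cases hw0 : (↑u⁻¹ : R) * s - 1 = 0
    · rw [hw0, zero_mul] at hπw; exact hπ0 hπw
    by_cases hwU : IsUnit ((↑u⁻¹ : R) * s - 1)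
    · obtain ⟨uw, huw⟩ := hwU
      apply hfJ
      have hfeq : f = ↑uw⁻¹ * π := by
        rw [hπw, ← huw, ← mul_assoc, Units.inv_mul, one_mul]
      rw [hfeq]
      exact Ideal.mul_mem_left _ _ hπJ
    obtain ⟨sN, K, hK, hwK⟩ := hufsr.1 _ hw0 hwU
    have hF3prod : π = (List.ofFn (Fin.append K (fun _ : Fin 1 => f))).prod := by
      rw [ofFn_append_prod, ofFn_one_prod, ← hwK, hπw]
    have hG3prod : π = (List.ofFn (fun _ : Fin k => p)).prod := by
      rw [ofFn_const_prod]
    obtain ⟨hlen, σ, hperm⟩ := hufsr.2 π hπ0 hπU (sN + 1) k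
      (Fin.append K (fun _ : Fin 1 => f)) (fun _ => p)
      (forall_append_pred (P := fun y => SNormal y ∧ SIrreducible y) hK (fun _ => ⟨hfN, hfI⟩)) (fun _ => ⟨hpN, hpI⟩)
      hF3prod hG3prod
    set i0 : Fin k := Fin.cast hlen (Fin.natAdd sN ⟨0, one_pos⟩) with hi0
    have hcast : Fin.cast hlen.symm i0 = Fin.natAdd sN ⟨0, one_pos⟩ := by
      apply Fin.ext; simp [hi0]
    have hsp := hperm i0
    rw [hcast, Fin.append_right] at hsp
    exact hfJ (hassocp hsp)
  by_cases hWU : IsUnit (f + π)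
  · -- f + π a unit : length contradiction
    obtain ⟨u, hu⟩ := hWU
    have hfW : f = ↑u - π := by rw [hu]; abel
    have hfπ : f * π = ↑u * π := by rw [hfW, sub_mul, hππ, sub_zero]
    have hz0 : f * π ≠ 0 := by
      rw [hfπ]
      intro h
      exact hπ0 ((Units.mul_right_eq_zero u).mp h)
    have hzJ : f * π ∈ canonicalSuperideal 𝒜 := Ideal.mul_mem_left _ _ hπJ
    have hzU : ¬ IsUnit (f * π) := fun h => unit_not_mem_J 𝒜 hdom h hzJ
    have hprod1 : f * π = (List.ofFn (Fin.cons f (fun _ : Fin k => p) : Fin (k+1) → R)).prod := by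
      rw [ofFn_cons_prod, ofFn_const_prod, hπ]
    have hprod2 : f * π =
        (List.ofFn (Fin.cons ((↑u : R) * p) (fun _ : Fin j => p) : Fin (j+1) → R)).prod := by
      rw [ofFn_cons_prod, ofFn_const_prod, hfπ, hπ, hk, pow_succ', ← mul_assoc]
    obtain ⟨hlen, -⟩ := hufsr.2 (f * π) hz0 hzU (k+1) (j+1)
      (Fin.cons f (fun _ : Fin k => p)) (Fin.cons ((↑u : R) * p) (fun _ : Fin j => p))
      (forall_cons_pred (P := fun y => SNormal y ∧ SIrreducible y) ⟨hfN, hfI⟩ (fun _ => ⟨hpN, hpI⟩))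
      (forall_cons_pred (P := fun y => SNormal y ∧ SIrreducible y) ⟨snormal_unit_mul hpN u, sirreducible_unit_mul hpI u⟩
        (fun _ => ⟨hpN, hpI⟩))
      hprod1 hprod2
    omega
  · -- f + π not a unit
    have hWJ : f + π ∉ canonicalSuperideal 𝒜 := by
      intro h
      apply hfJ
      have hfeq : f = (f + π) - π := by abel
      rw [hfeq]
      exact Ideal.sub_mem _ h hπJ
    have hW0 : f + π ≠ 0 := fun h => hWJ (h ▸ (canonicalSuperideal 𝒜).zero_mem)
    obtain ⟨e, H, hHni, hHeq⟩ := hufsr.1 _ hW0 hWU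
    by_cases hz : f * π = 0
    · by_cases hz' : π * f = 0
      · -- compare f² with (f+π)²
        have hWW : (f + π) * (f + π) = f * f := by
          rw [add_mul, mul_add, mul_add, hz, hz', hππ]
          abel
        have hff0 : f * f ≠ 0 := by
          intro h
          rcases hdom.2 f f (by rw [h]; exact (canonicalSuperideal 𝒜).zero_mem) with hc | hc <;>
            exact hfJ hc
        have hffU : ¬ IsUnit (f * f) := fun h => hfU (isUnit_of_isUnit_sq h)
        have hprod1 : f * f = (List.ofFn (fun _ : Fin 2 => f)).prod := by
          rw [ofFn_const_prod, pow_two]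
        have hprod2 : f * f = (List.ofFn (Fin.append H H)).prod := by
          rw [ofFn_append_prod, ← hHeq, hWW]
        obtain ⟨hlen, σ, hperm⟩ := hufsr.2 (f * f) hff0 hffU 2 (e+e)
          (fun _ => f) (Fin.append H H)
          (fun _ => ⟨hfN, hfI⟩) (forall_append_pred (P := fun y => SNormal y ∧ SIrreducible y) hHni hHni) hprod1 hprod2
        have he1 : e = 1 := by omega
        subst he1
        rw [ofFn_one_prod] at hHeq
        have hHall : ∀ q : Fin 1, H q = f + π := fun q => by
          rw [show q = 0 from Subsingleton.elim q 0]; exact hHeq.symm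
        have hsp := hperm ⟨0, by omega⟩
        by_cases hlt : ((σ ⟨0, by omega⟩ : Fin (1+1)) : ℕ) < 1
        · rw [append_eval_lt _ _ hlt, hHall _] at hsp
          exact keyW hsp
        · rw [append_eval_ge _ _ hlt, hHall _] at hsp
          exact keyW hsp
      · -- π * f ≠ 0
        have hπW : π * (f + π) = π * f := by rw [mul_add, hππ, add_zero]
        have hzJ' : π * f ∈ canonicalSuperideal 𝒜 := J_mul_mem 𝒜 hsc hπJ f
        have hzU' : ¬ IsUnit (π * f) := fun h => unit_not_mem_J 𝒜 hdom h hzJ'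
        have hprod1 : π * f =
            (List.ofFn (Fin.append (fun _ : Fin k => p) (fun _ : Fin 1 => f))).prod := by
          rw [ofFn_append_prod, ofFn_const_prod, ofFn_one_prod, hπ]
        have hprod2 : π * f = (List.ofFn (Fin.append (fun _ : Fin k => p) H)).prod := by
          rw [ofFn_append_prod, ofFn_const_prod, ← hHeq, ← hπ, hπW]
        obtain ⟨hlen, σ, hperm⟩ := hufsr.2 (π * f) hz' hzU' (k+1) (k+e)
          (Fin.append (fun _ : Fin k => p) (fun _ : Fin 1 => f))
          (Fin.append (fun _ : Fin k => p) H)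
          (forall_append_pred (P := fun y => SNormal y ∧ SIrreducible y) (fun _ => ⟨hpN, hpI⟩) (fun _ => ⟨hfN, hfI⟩))
          (forall_append_pred (P := fun y => SNormal y ∧ SIrreducible y) (fun _ => ⟨hpN, hpI⟩) hHni) hprod1 hprod2
        have he1 : e = 1 := by omega
        subst he1
        rw [ofFn_one_prod] at hHeq
        have hHall : ∀ q : Fin 1, H q = f + π := fun q => by
          rw [show q = 0 from Subsingleton.elim q 0]; exact hHeq.symm
        have hsp := hperm ⟨k, by omega⟩
        have hcast : Fin.cast hlen.symm ⟨k, by omega⟩ = Fin.natAdd k (⟨0, one_pos⟩ : Fin 1) := by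
          apply Fin.ext; simp
        rw [hcast, Fin.append_right] at hsp
        by_cases hlt : ((σ ⟨k, by omega⟩ : Fin (k+1)) : ℕ) < k
        · rw [append_eval_lt _ _ hlt] at hsp
          exact hfJ (hassocp hsp)
        · rw [append_eval_ge _ _ hlt, hHall _] at hsp
          exact keyW hsp
    · -- f * π ≠ 0 : the main case
      have hWπ : (f + π) * π = f * π := by rw [add_mul, hππ, add_zero]
      have hzJ : f * π ∈ canonicalSuperideal 𝒜 := Ideal.mul_mem_left _ _ hπJ
      have hzU : ¬ IsUnit (f * π) := fun h => unit_not_mem_J 𝒜 hdom h hzJ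
      have hprod1 : f * π =
          (List.ofFn (Fin.cons f (fun _ : Fin k => p) : Fin (k+1) → R)).prod := by
        rw [ofFn_cons_prod, ofFn_const_prod, hπ]
      have hprod2 : f * π = (List.ofFn (Fin.append H (fun _ : Fin k => p))).prod := by
        rw [ofFn_append_prod, ofFn_const_prod, ← hHeq, ← hπ, hWπ]
      obtain ⟨hlen, σ, hperm⟩ := hufsr.2 (f * π) hz hzU (k+1) (e+k)
        (Fin.cons f (fun _ : Fin k => p)) (Fin.append H (fun _ : Fin k => p))
        (forall_cons_pred (P := fun y => SNormal y ∧ SIrreducible y) ⟨hfN, hfI⟩ (fun _ => ⟨hpN, hpI⟩))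
        (forall_append_pred (P := fun y => SNormal y ∧ SIrreducible y) hHni (fun _ => ⟨hpN, hpI⟩)) hprod1 hprod2
      have he1 : e = 1 := by omega
      subst he1
      rw [ofFn_one_prod] at hHeq
      have hHall : ∀ q : Fin 1, H q = f + π := fun q => by
        rw [show q = 0 from Subsingleton.elim q 0]; exact hHeq.symm
      have hsp := hperm ⟨0, by omega⟩
      have hcast : Fin.cast hlen.symm ⟨0, by omega⟩ = (0 : Fin (k+1)) := by
        apply Fin.ext; simp
      rw [hcast, Fin.cons_zero] at hsp
      by_cases hlt : ((σ ⟨0, by omega⟩ : Fin (1+k)) : ℕ) < 1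
      · rw [append_eval_lt _ _ hlt, hHall _] at hsp
        exact keyW hsp
      · rw [append_eval_ge _ _ hlt] at hsp
        exact hfJ (hassocp hsp)
end

section
/- Let R be a supercommutative superring that is a unique factorization superring (UFSR). Let a ∈ 𝒜 0 be an even irreducible element, and let x be a nonzero homogeneous element of R with a * x = 0. Then there exist n : ℕ and y : R such that x = a ^ n * y, where either y is a unit, or y = f₁ * ⋯ * f_d is a finite product of normal irreducible elements none of which is associated to a. (Lemma 3.10 of the paper.) -/
/-- **Lemma 3.10**: in a UFSR, if `a` is an even irreducible element and `x` is a
nonzero homogeneous element with `a * x = 0`, then `x = a ^ n * y` where `y` is a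
unit or a product of normal irreducible elements, none associated to `a`. -/
theorem ufsr_even_irreducible_annihilator_factorization
    {R : Type*} [Ring R] [Nontrivial R]
    (𝒜 : ZMod 2 → AddSubgroup R) [GradedRing 𝒜]
    (hsc : SuperComm 𝒜) (h2 : TwoRegular R) (hodd : 𝒜 1 ≠ ⊥)
    (hufsr : IsUFSR R)
    (a : R) (ha0 : a ∈ 𝒜 0) (hairr : SIrreducible a)
    (x : R) (hx : x ≠ 0) (hxhom : x ∈ 𝒜 0 ∨ x ∈ 𝒜 1) (hax : a * x = 0) :
    ∃ (n : ℕ) (y : R), x = a ^ n * y ∧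
      (IsUnit y ∨
        ∃ (d : ℕ) (f : Fin d → R),
          (∀ i, SNormal (f i) ∧ SIrreducible (f i) ∧ ¬ SAssociated (f i) a) ∧
          y = (List.ofFn f).prod) := by

  -- `a` is central: it commutes with every homogeneous element, hence with all of `R`.
  have hcomm : ∀ i : ZMod 2, ∀ y ∈ 𝒜 i, a * y = y * a := by
    intro i y hy
    have h := hsc 0 i a ha0 y hy
    simpa using h
  have hc : ∀ r : R, a * r = r * a := fun r =>
    DirectSum.Decomposition.inductionOn 𝒜 (motive := fun r => a * r = r * a)
      (by simp) (fun {i} m => hcomm i m m.2)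
      (fun m m' h h' => by show a * (m + m') = (m + m') * a; rw [mul_add, add_mul, h, h']) r
  have key : ∀ p q : R, p * (a * q) = a * (p * q) := fun p q => by
    rw [← mul_assoc, ← hc p, mul_assoc]
  have hanorm : SNormal a := by
    unfold SNormal
    ext z
    simp only [Set.mem_setOf_eq]
    constructor
    · rintro ⟨r, rfl⟩; exact ⟨r, hc r⟩
    · rintro ⟨r, rfl⟩; exact ⟨r, (hc r).symm⟩
  have main : ∀ d : ℕ, ∀ f : Fin d → R, ∀ x : R, x ≠ 0 →
      (∀ i, SNormal (f i) ∧ SIrreducible (f i)) → x = (List.ofFn f).prod →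
      ∃ (n : ℕ) (y : R), x = a ^ n * y ∧
        (IsUnit y ∨
          ∃ (d' : ℕ) (g : Fin d' → R),
            (∀ i, SNormal (g i) ∧ SIrreducible (g i) ∧ ¬ SAssociated (g i) a) ∧
            y = (List.ofFn g).prod) := by
    intro d
    induction d using Nat.strong_induction_on with
    | _ d IH =>
      intro f x hx hf hxf
      by_cases hxu : IsUnit x
      · exact ⟨0, x, by simp, Or.inl hxu⟩
      by_cases hassoc : ∀ i, ¬ SAssociated (f i) a
      · exact ⟨0, x, by simp, Or.inr ⟨d, f, fun i => ⟨(hf i).1, (hf i).2, hassoc i⟩, hxf⟩⟩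
      push_neg at hassoc
      obtain ⟨i, u, v, hfi⟩ := hassoc
      have hmem : f i ∈ List.ofFn f := List.mem_ofFn.mpr ⟨i, rfl⟩
      obtain ⟨s, t, hst⟩ := List.append_of_mem hmem
      set x' := s.prod * ((u : R) * ((v : R) * t.prod)) with hx'def
      have hxx' : x = a * x' := by
        rw [hxf, hst, List.prod_append, List.prod_cons, hfi, hx'def,
          mul_assoc (u : R) a (v : R), mul_assoc (u : R) ((a : R) * v) t.prod,
          mul_assoc a (v : R) t.prod, key (u : R), key s.prod]
      have hx'0 : x' ≠ 0 := fun h => hx (by rw [hxx', h, mul_zero])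
      by_cases hx'u : IsUnit x'
      · exact ⟨1, x', by rw [pow_one, hxx'], Or.inl hx'u⟩
      obtain ⟨m, g, hg, hx'g⟩ := hufsr.1 x' hx'0 hx'u
      have hgf : ∀ j : Fin (m + 1),
          SNormal ((Fin.cons (α := fun _ => R) a g) j) ∧ SIrreducible ((Fin.cons (α := fun _ => R) a g) j) := by
        intro j
        induction j using Fin.cases with
        | zero => simpa using And.intro hanorm hairr
        | succ j => simpa using hg j
      have hofn : List.ofFn ((Fin.cons (α := fun _ => R) a g)) = a :: List.ofFn g := by
        rw [List.ofFn_succ]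
        simp [Fin.cons_succ]
      have hxg : x = (List.ofFn ((Fin.cons (α := fun _ => R) a g))).prod := by
        rw [hofn, List.prod_cons, ← hx'g, hxx']
      obtain ⟨hd, -⟩ := hufsr.2 x hx hxu d (m + 1) f ((Fin.cons (α := fun _ => R) a g)) hf hgf hxf hxg
      have hm : m < d := by omega
      obtain ⟨n, y, hy, hgood⟩ := IH m hm g x' hx'0 hg hx'g
      exact ⟨n + 1, y, by rw [hxx', hy, ← mul_assoc, ← pow_succ'], hgood⟩
  by_cases hxu : IsUnit x
  · exact ⟨0, x, by simp, Or.inl hxu⟩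
  obtain ⟨d, f, hf, hxf⟩ := hufsr.1 x hx hxu
  exact main d f x hx hf hxf
end

section
/- Let R be a supercommutative superring which is oddly-Noetherian, with the odd part 𝒜 1 generated over 𝒜 0 by n elements: there are z : Fin n → R with z j ∈ 𝒜 1 for all j, such that every x ∈ 𝒜 1 equals ∑ j, a j * z j for some a : Fin n → R with a j ∈ 𝒜 0 for all j. Then every product of n + 1 elements of the canonical superideal 𝒥 is zero: for all x : Fin (n+1) → R with x i ∈ 𝒥 for all i, the ordered product x 0 * x 1 * ⋯ * x n equals 0. In particular 𝒥 is a nilpotent ideal. (This is the computation proving Theorem 3.7.) -/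
section Aux

variable {R : Type*} [Ring R] {n : ℕ}

def wordSpan (z : Fin n → R) (m : ℕ) : Submodule R R :=
  Submodule.span R { v | ∃ w : List (Fin n), m ≤ w.length ∧ v = (w.map z).prod }

variable {𝒜 : ZMod 2 → AddSubgroup R}

theorem aux_anticomm (hsc : SuperComm 𝒜) {x y : R} (hx : x ∈ 𝒜 1) (hy : y ∈ 𝒜 1) :
    x * y = -(y * x) := by
  have h := hsc 1 1 x hx y hy
  rw [show ((1:ZMod 2).val * (1:ZMod 2).val) = 1 from rfl, pow_one, neg_one_zsmul] at h
  exact h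

theorem aux_evencomm (hsc : SuperComm 𝒜) {x y : R} (hx : x ∈ 𝒜 1) (hy : y ∈ 𝒜 0) :
    x * y = y * x := by
  have h := hsc 1 0 x hx y hy
  rw [show ((1:ZMod 2).val * (0:ZMod 2).val) = 0 from rfl, pow_zero, one_smul] at h
  exact h

theorem aux_sq (hsc : SuperComm 𝒜) (h2 : ∀ x : R, 2 * x = 0 → x = 0)
    {x : R} (hx : x ∈ 𝒜 1) : x * x = 0 := by
  apply h2
  rw [two_mul]
  nth_rewrite 1 [aux_anticomm hsc hx hx]
  rw [neg_add_cancel]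

theorem aux_mem_mul (hsc : SuperComm 𝒜) (h2 : ∀ x : R, 2 * x = 0 → x = 0)
    {z : Fin n → R} (hz : ∀ j, z j ∈ 𝒜 1) (a : Fin n) :
    ∀ w : List (Fin n), a ∈ w → z a * (w.map z).prod = 0 := by
  intro w
  induction w with
  | nil => intro h; exact absurd h List.not_mem_nil
  | cons b t ih =>
    intro h
    rw [List.map_cons, List.prod_cons, ← mul_assoc]
    rcases List.mem_cons.mp h with h | h
    · subst h; rw [aux_sq hsc h2 (hz a), zero_mul]
    · rw [aux_anticomm hsc (hz a) (hz b), neg_mul, mul_assoc, ih h, mul_zero, neg_zero]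

theorem aux_dup (hsc : SuperComm 𝒜) (h2 : ∀ x : R, 2 * x = 0 → x = 0)
    {z : Fin n → R} (hz : ∀ j, z j ∈ 𝒜 1) :
    ∀ w : List (Fin n), ¬ w.Nodup → (w.map z).prod = 0 := by
  intro w
  induction w with
  | nil => intro h; exact absurd List.nodup_nil h
  | cons b t ih =>
    intro h
    rw [List.nodup_cons] at h
    push_neg at h
    rw [List.map_cons, List.prod_cons]
    by_cases hbt : b ∈ t
    · exact aux_mem_mul hsc h2 hz b t hbt
    · rw [ih (h hbt), mul_zero]

theorem aux_decompose [GradedRing 𝒜] (d : R) :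
    (DirectSum.decompose 𝒜 d 0 : R) + (DirectSum.decompose 𝒜 d 1 : R) = d := by
  classical
  have h := DirectSum.sum_support_decompose 𝒜 d
  rw [Finset.sum_subset (Finset.subset_univ _)
    (fun i _ hi => by simpa using DFinsupp.notMem_support_iff.mp hi)] at h
  rwa [show (Finset.univ : Finset (ZMod 2)) = {0, 1} from by decide,
    Finset.sum_insert (by decide), Finset.sum_singleton] at h

theorem aux_key [GradedRing 𝒜] (hsc : SuperComm 𝒜) {z : Fin n → R} (hz : ∀ j, z j ∈ 𝒜 1)
    (hgen : ∀ x ∈ 𝒜 1, ∃ a : Fin n → R, (∀ j, a j ∈ 𝒜 0) ∧ x = ∑ j, a j * z j)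
    (m : ℕ) (j : Fin n) :
    ∀ v ∈ wordSpan z m, ∀ d : R, z j * (d * v) ∈ wordSpan z (m + 1) := by
  intro v hv
  induction hv using Submodule.span_induction with
  | mem v hvm =>
    obtain ⟨w, hwl, rfl⟩ := hvm
    intro d
    set v := (w.map z).prod with hvdef
    obtain ⟨d0, d1, hm0, hm1, rfl⟩ : ∃ d0 d1 : R, d0 ∈ 𝒜 0 ∧ d1 ∈ 𝒜 1 ∧ d = d0 + d1 :=
      ⟨_, _, SetLike.coe_mem _, SetLike.coe_mem _, (aux_decompose (𝒜 := 𝒜) d).symm⟩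
    obtain ⟨a, ha, had⟩ := hgen d1 hm1
    have e1 : z j * ((d0 + d1) * v) = d0 • (z j * v) + -(∑ k, a k • (z k * (z j * v))) := by
      rw [add_mul, mul_add, ← mul_assoc,
        ← mul_assoc, aux_evencomm hsc (hz j) hm0,
        aux_anticomm hsc (hz j) hm1, had, neg_mul, mul_assoc,
        Finset.sum_mul, Finset.sum_mul]
      congr 2
      exact Finset.sum_congr rfl fun k _ => by rw [smul_eq_mul, mul_assoc, mul_assoc]
    rw [e1]
    have hjv : z j * v = (((j :: w).map z).prod) := by
      rw [List.map_cons, List.prod_cons]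
    refine Submodule.add_mem _ (Submodule.smul_mem _ _ (Submodule.subset_span
      ⟨j :: w, by simp; omega, hjv⟩)) (Submodule.neg_mem _
      (Submodule.sum_mem _ fun k _ => Submodule.smul_mem _ _ (Submodule.subset_span
      ⟨k :: j :: w, by simp; omega, by rw [List.map_cons, List.prod_cons, ← hjv]⟩)))
  | zero => intro d; simpa using Submodule.zero_mem _
  | add u v hu hv ihu ihv =>
    intro d; rw [mul_add, mul_add]; exact Submodule.add_mem _ (ihu d) (ihv d)
  | smul e u hu ihu =>
    intro d
    rw [smul_eq_mul, ← mul_assoc d e u]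
    exact ihu (d * e)

theorem aux_step [GradedRing 𝒜] (hsc : SuperComm 𝒜) {z : Fin n → R} (hz : ∀ j, z j ∈ 𝒜 1)
    (hgen : ∀ x ∈ 𝒜 1, ∃ a : Fin n → R, (∀ j, a j ∈ 𝒜 0) ∧ x = ∑ j, a j * z j)
    {m : ℕ} {x v : R} (hx : x ∈ Submodule.span R (Set.range z)) (hv : v ∈ wordSpan z m) :
    x * v ∈ wordSpan z (m + 1) := by
  obtain ⟨c, hc⟩ := Submodule.mem_span_range_iff_exists_fun R |>.mp hx
  rw [← hc, Finset.sum_mul]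
  refine Submodule.sum_mem _ fun k _ => ?_
  rw [smul_eq_mul, mul_assoc]
  refine Submodule.smul_mem _ _ ?_
  have := aux_key hsc hz hgen m k v hv 1
  rwa [one_mul] at this

end Aux


/-- The computation proving **Theorem 3.7**: if the odd part of `R` is generated
over the even part by `n` elements, then any product of `n + 1` elements of the
canonical superideal `𝒥` vanishes; in particular `𝒥` is nilpotent. -/
theorem oddlyNoetherian_canonicalSuperideal_pow_eq_zero
    {R : Type*} [Ring R] [Nontrivial R]
    (𝒜 : ZMod 2 → AddSubgroup R) [GradedRing 𝒜]
    (hsc : SuperComm 𝒜) (h2 : TwoRegular R)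
    (n : ℕ) (z : Fin n → R) (hz : ∀ j, z j ∈ 𝒜 1)
    (hgen : ∀ x ∈ 𝒜 1, ∃ a : Fin n → R, (∀ j, a j ∈ 𝒜 0) ∧ x = ∑ j, a j * z j) :
    ∀ x : Fin (n + 1) → R, (∀ i, x i ∈ canonicalSuperideal 𝒜) →
      (List.ofFn x).prod = 0 := by
  intro x hx
  have hJ : canonicalSuperideal 𝒜 ≤ Submodule.span R (Set.range z) := by
    rw [canonicalSuperideal, Ideal.span_le]
    intro w hw
    obtain ⟨a, ha, hwe⟩ := hgen w hw
    rw [hwe]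
    exact Submodule.sum_mem _ fun j _ => by
      rw [← smul_eq_mul]; exact Submodule.smul_mem _ _ (Submodule.subset_span ⟨j, rfl⟩)
  have claim : ∀ m (y : Fin m → R), (∀ i, y i ∈ Submodule.span R (Set.range z)) →
      (List.ofFn y).prod ∈ wordSpan z m := by
    intro m
    induction m with
    | zero =>
      intro y _
      have h1 : ((1 : R)) ∈ wordSpan z 0 :=
        Submodule.subset_span ⟨[], le_refl 0, by simp⟩
      simpa using h1
    | succ m ih =>
      intro y hy
      rw [List.ofFn_succ, List.prod_cons]
      exact aux_step hsc hz hgen (hy 0) (ih _ fun i => hy i.succ)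
  have hmem := claim (n + 1) x (fun i => hJ (hx i))
  have hbot : wordSpan z (n + 1) ≤ ⊥ := by
    rw [wordSpan, Submodule.span_le]
    rintro v ⟨w, hwl, rfl⟩
    have hnd : ¬ w.Nodup := fun h => by
      have hl := h.length_le_card
      rw [Fintype.card_fin] at hl
      omega
    simpa using aux_dup hsc h2 hz w hnd
  exact (Submodule.mem_bot R).mp (hbot hmem)
end

section
/- Let R be a supercommutative superring that is oddly-Noetherian, a superdomain, and a unique factorization superring (UFSR). Then R is local with unique maximal ideal the canonical superideal 𝒥 (for every x : R, IsUnit x ↔ x ∉ 𝒥), and 𝒥 is nilpotent: there exists m : ℕ such that every product of m elements of 𝒥 is zero. (Theorem 3.7 of the paper.) -/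
/-- `R` is oddly-Noetherian: the odd part `𝒜 1` is finitely generated
over the even part `𝒜 0`. -/
def IsOddlyNoetherian {R : Type*} [Ring R] (𝒜 : ZMod 2 → AddSubgroup R) : Prop :=
  ∃ (n : ℕ) (z : Fin n → R), (∀ j, z j ∈ 𝒜 1) ∧
    ∀ x ∈ 𝒜 1, ∃ a : Fin n → R, (∀ j, a j ∈ 𝒜 0) ∧ x = ∑ j, a j * z j


namespace SRAux

variable {R : Type*} [Ring R]

lemma isUnit_of_left_right {f a b : R} (ha : a * f = 1) (hb : f * b = 1) : IsUnit f := by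
  have hab : a = b := by
    calc a = a * (f * b) := by rw [hb, mul_one]
    _ = (a * f) * b := by rw [mul_assoc]
    _ = b := by rw [ha, one_mul]
  exact ⟨⟨f, b, hb, hab ▸ ha⟩, rfl⟩

variable (𝒜 : ZMod 2 → AddSubgroup R)

lemma decomp [GradedRing 𝒜] (r : R) : ∃ r0 ∈ 𝒜 0, ∃ r1 ∈ 𝒜 1, r = r0 + r1 := by
  refine ⟨DirectSum.decompose 𝒜 r 0, SetLike.coe_mem _, DirectSum.decompose 𝒜 r 1,
    SetLike.coe_mem _, ?_⟩
  classical
  have huniv : ∑ i : ZMod 2, (DirectSum.decompose 𝒜 r i : R) = r := by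
    conv_rhs => rw [← DirectSum.sum_support_decompose 𝒜 r]
    symm
    apply Finset.sum_subset (Finset.subset_univ _)
    intro i _ hmem
    rw [DFinsupp.notMem_support_iff.mp hmem]
    rfl
  have henum : (Finset.univ : Finset (ZMod 2)) = {0, 1} := by decide
  rw [henum, Finset.sum_insert (by decide), Finset.sum_singleton] at huniv
  exact huniv.symm

variable {𝒜} [GradedRing 𝒜] (hsc : SuperComm 𝒜)
include hsc

lemma even_comm {a : R} (ha : a ∈ 𝒜 0) (r : R) : a * r = r * a := by
  obtain ⟨r0, h0, r1, h1, rfl⟩ := decomp 𝒜 r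
  have e0 : a * r0 = r0 * a := by
    have := hsc 0 0 a ha r0 h0
    simpa using this
  have e1 : a * r1 = r1 * a := by
    have := hsc 0 1 a ha r1 h1
    simpa using this
  rw [mul_add, add_mul, e0, e1]

lemma odd_anticomm {x y : R} (hx : x ∈ 𝒜 1) (hy : y ∈ 𝒜 1) : x * y = -(y * x) := by
  have := hsc 1 1 x hx y hy
  simpa [show ((1 : ZMod 2).val) = 1 from rfl] using this

lemma odd_sq (h2 : ∀ x : R, 2 * x = 0 → x = 0) {x : R} (hx : x ∈ 𝒜 1) : x * x = 0 := by
  have h := SRAux.odd_anticomm hsc hx hx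
  have h' : 2 * (x * x) = 0 := by
    rw [two_mul]
    nth_rewrite 1 [h]
    exact neg_add_cancel _
  exact h2 _ h'

lemma odd_swap {z : R} (hz : z ∈ 𝒜 1) (r : R) : ∃ s : R, z * r = s * z := by
  obtain ⟨r0, h0, r1, h1, rfl⟩ := decomp 𝒜 r
  refine ⟨r0 - r1, ?_⟩
  have e0 : z * r0 = r0 * z := (SRAux.even_comm hsc h0 z).symm
  have e1 : z * r1 = -(r1 * z) := SRAux.odd_anticomm hsc hz h1
  rw [mul_add, e0, e1, sub_mul]
  abel

end SRAux

section JAux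

variable {R : Type*} [Ring R] {𝒜 : ZMod 2 → AddSubgroup R} [GradedRing 𝒜]
  (hsc : SuperComm 𝒜)

local notation "J" => canonicalSuperideal 𝒜

include hsc

lemma J_mul_right {x : R} (hx : x ∈ J) (r : R) : x * r ∈ J := by
  refine Submodule.span_induction ?_ ?_ ?_ ?_ hx
  · intro z hz
    obtain ⟨s, hs⟩ := SRAux.odd_swap hsc hz r
    rw [hs]
    exact Ideal.mul_mem_left _ s (Ideal.subset_span hz)
  · simp
  · intro a b _ _ ha hb
    rw [add_mul]
    exact Ideal.add_mem _ ha hb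
  · intro a x _ hx'
    rw [smul_eq_mul, mul_assoc]
    exact Ideal.mul_mem_left _ a hx'

lemma J_comb {n : ℕ} {z : Fin n → R}
    (hgen : ∀ x ∈ 𝒜 1, ∃ a : Fin n → R, (∀ j, a j ∈ 𝒜 0) ∧ x = ∑ j, a j * z j)
    {x : R} (hx : x ∈ J) : ∃ a : Fin n → R, x = ∑ j, a j * z j := by
  clear hsc
  refine Submodule.span_induction ?_ ?_ ?_ ?_ hx
  · intro y hy
    obtain ⟨a, -, ha⟩ := hgen y hy
    exact ⟨a, ha⟩
  · exact ⟨0, by simp⟩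
  · rintro x' y' - - ⟨a, rfl⟩ ⟨b, rfl⟩
    exact ⟨a + b, by rw [← Finset.sum_add_distrib]; simp [add_mul]⟩
  · rintro r x' - ⟨a, rfl⟩
    refine ⟨fun j => r * a j, ?_⟩
    rw [smul_eq_mul, Finset.mul_sum]
    simp [mul_assoc]

omit hsc

/-- The additive subgroup generated by `c * z_{j₁} ⋯ z_{jₖ}`. -/
def Tgrp {n : ℕ} (z : Fin n → R) (k : ℕ) : AddSubgroup R :=
  AddSubgroup.closure {x | ∃ (c : R) (L : List (Fin n)), L.length = k ∧ x = c * (L.map z).prod}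

include hsc in
lemma zmem_prod_zero (h2 : TwoRegular R) {n : ℕ} {z : Fin n → R} (hz : ∀ j, z j ∈ 𝒜 1) :
    ∀ (L : List (Fin n)) (a : Fin n), a ∈ L → z a * (L.map z).prod = 0 := by
  intro L
  induction L with
  | nil => intro a ha; simp at ha
  | cons b L ih =>
    intro a ha
    rcases List.mem_cons.mp ha with rfl | ha'
    · rw [List.map_cons, List.prod_cons, ← mul_assoc, SRAux.odd_sq hsc h2 (hz a), zero_mul]
    · rw [List.map_cons, List.prod_cons, ← mul_assoc,
        SRAux.odd_anticomm hsc (hz a) (hz b), neg_mul, mul_assoc, ih a ha', mul_zero, neg_zero]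

include hsc in
lemma dup_prod_zero (h2 : TwoRegular R) {n : ℕ} {z : Fin n → R} (hz : ∀ j, z j ∈ 𝒜 1) :
    ∀ L : List (Fin n), ¬ L.Nodup → (L.map z).prod = 0 := by
  intro L
  induction L with
  | nil => intro h; exact absurd List.nodup_nil h
  | cons a L ih =>
    intro h
    by_cases ha : a ∈ L
    · rw [List.map_cons, List.prod_cons]
      exact zmem_prod_zero hsc h2 hz L a ha
    · have : ¬ L.Nodup := fun hnd => h (List.nodup_cons.mpr ⟨ha, hnd⟩)
      rw [List.map_cons, List.prod_cons, ih this, mul_zero]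

include hsc in
lemma mem_T_succ {n : ℕ} {z : Fin n → R}
    (hgen : ∀ x ∈ 𝒜 1, ∃ a : Fin n → R, (∀ j, a j ∈ 𝒜 0) ∧ x = ∑ j, a j * z j)
    (hz : ∀ j, z j ∈ 𝒜 1)
    {x p : R} {k : ℕ} (hx : x ∈ J) (hp : p ∈ Tgrp z k) : x * p ∈ Tgrp z (k + 1) := by
  refine AddSubgroup.closure_induction ?_ ?_ ?_ ?_ hp
  · rintro y ⟨c, L, hL, rfl⟩
    obtain ⟨a, rfl⟩ := J_comb hsc hgen hx
    rw [Finset.sum_mul]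
    refine AddSubgroup.sum_mem _ ?_
    intro j _
    obtain ⟨s, hs⟩ := SRAux.odd_swap hsc (hz j) c
    have hterm : a j * z j * (c * (L.map z).prod) = (a j * s) * (((j :: L).map z).prod) := by
      rw [List.map_cons, List.prod_cons, mul_assoc (a j), ← mul_assoc (z j), hs]
      noncomm_ring
    rw [hterm]
    exact AddSubgroup.subset_closure ⟨a j * s, j :: L, by simp [hL], rfl⟩
  · simpa using (Tgrp z (k+1)).zero_mem
  · intro p q _ _ hp' hq'
    rw [mul_add]
    exact (Tgrp z (k+1)).add_mem hp' hq'
  · intro p _ hp'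
    rw [mul_neg]
    exact (Tgrp z (k+1)).neg_mem hp'

include hsc in
lemma listprod_mem_T {n : ℕ} {z : Fin n → R}
    (hgen : ∀ x ∈ 𝒜 1, ∃ a : Fin n → R, (∀ j, a j ∈ 𝒜 0) ∧ x = ∑ j, a j * z j)
    (hz : ∀ j, z j ∈ 𝒜 1) :
    ∀ Lx : List R, (∀ y ∈ Lx, y ∈ J) → Lx.prod ∈ Tgrp z Lx.length := by
  intro Lx
  induction Lx with
  | nil =>
    intro _
    exact AddSubgroup.subset_closure ⟨1, [], rfl, by simp⟩
  | cons y Lx ih =>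
    intro hmem
    rw [List.prod_cons, List.length_cons]
    exact mem_T_succ hsc hgen hz (hmem y (List.mem_cons_self))
      (ih fun w hw => hmem w (List.mem_cons_of_mem _ hw))

include hsc in
lemma T_top_zero (h2 : TwoRegular R) {n : ℕ} {z : Fin n → R} (hz : ∀ j, z j ∈ 𝒜 1)
    {p : R} (hp : p ∈ Tgrp z (n + 1)) : p = 0 := by
  refine AddSubgroup.closure_induction ?_ ?_ ?_ ?_ hp
  · rintro y ⟨c, L, hL, rfl⟩
    have hnd : ¬ L.Nodup := by
      intro hnd
      have := hnd.length_le_card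
      rw [hL, Fintype.card_fin] at this
      omega
    rw [dup_prod_zero hsc h2 hz L hnd, mul_zero]
  · rfl
  · intro a b _ _ ha hb; rw [ha, hb, add_zero]
  · intro a _ ha; rw [ha, neg_zero]

include hsc in
lemma J_nilpotent_prod (h2 : TwoRegular R) {n : ℕ} {z : Fin n → R}
    (hgen : ∀ x ∈ 𝒜 1, ∃ a : Fin n → R, (∀ j, a j ∈ 𝒜 0) ∧ x = ∑ j, a j * z j)
    (hz : ∀ j, z j ∈ 𝒜 1)
    (x : Fin (n + 1) → R) (hx : ∀ i, x i ∈ J) : (List.ofFn x).prod = 0 := by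
  have hmem : (List.ofFn x).prod ∈ Tgrp z (n + 1) := by
    have := listprod_mem_T hsc hgen hz (List.ofFn x) ?_
    · rwa [List.length_ofFn] at this
    · intro y hy
      obtain ⟨i, rfl⟩ := List.mem_ofFn.mp hy
      exact hx i
  exact T_top_zero hsc h2 hz hmem

end JAux

section Helpers

variable {R : Type*} [Ring R]

lemma prod_assoc_pow {Q : Type*} [CommRing Q] (fq : Q) :
    ∀ L : List Q, (∀ y ∈ L, ∃ u v : Qˣ, fq = (u : Q) * y * (v : Q)) →
      ∃ U : Qˣ, L.prod = (U : Q) * fq ^ L.length := by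
  intro L
  induction L with
  | nil => intro _; exact ⟨1, by simp⟩
  | cons y L ih =>
    intro hmem
    obtain ⟨u, v, huv⟩ := hmem y List.mem_cons_self
    obtain ⟨U, hU⟩ := ih fun w hw => hmem w (List.mem_cons_of_mem _ hw)
    have hy : y = ((u * v)⁻¹ : Qˣ) * fq := by
      have : ((u * v : Qˣ) : Q) * y = fq := by rw [huv]; push_cast; ring
      calc y = ((u * v)⁻¹ : Qˣ) * (((u * v : Qˣ) : Q) * y) := by
              rw [← mul_assoc, Units.inv_mul, one_mul]
        _ = ((u * v)⁻¹ : Qˣ) * fq := by rw [this]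
    refine ⟨(u * v)⁻¹ * U, ?_⟩
    rw [List.prod_cons, hU, hy, List.length_cons]
    push_cast
    ring

lemma prod_right_f {f : R} (hswap : ∀ x : R, ∃ s : R, f * x = s * f) :
    ∀ L : List R, (∀ y ∈ L, ∃ β : R, y = β * f) → ∃ c : R, L.prod = c * f ^ L.length := by
  intro L
  induction L with
  | nil => intro _; exact ⟨1, by simp⟩
  | cons y L ih =>
    intro hmem
    obtain ⟨β, rfl⟩ := hmem y List.mem_cons_self
    obtain ⟨c, hc⟩ := ih fun w hw => hmem w (List.mem_cons_of_mem _ hw)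
    obtain ⟨s, hs⟩ := hswap c
    refine ⟨β * s, ?_⟩
    rw [List.prod_cons, hc, List.length_cons, pow_succ']
    rw [← mul_assoc, mul_assoc β f c, hs]
    noncomm_ring

lemma pow_swap {f : R} (hswap : ∀ x : R, ∃ s : R, x * f = f * s) :
    ∀ (N : ℕ) (x : R), ∃ s : R, x * f ^ N = f ^ N * s := by
  intro N
  induction N with
  | zero => intro x; exact ⟨x, by simp⟩
  | succ N ih =>
    intro x
    obtain ⟨s₁, hs₁⟩ := hswap x
    obtain ⟨s₂, hs₂⟩ := ih s₁
    refine ⟨s₂, ?_⟩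
    rw [pow_succ', ← mul_assoc, hs₁, mul_assoc, hs₂, ← mul_assoc, ← pow_succ']

/-- The congruence of the two-sided ideal `I`. -/
def jCon (I : Ideal R) (hI : ∀ x ∈ I, ∀ r : R, x * r ∈ I) : RingCon R where
  r a b := a - b ∈ I
  iseqv := ⟨fun a => by simp, fun {a b} h => by simpa using I.neg_mem h,
    fun {a b c} h1 h2 => by simpa using I.add_mem h1 h2⟩
  add' := fun {a b c d} h1 h2 => by
    show a + c - (b + d) ∈ I
    have := I.add_mem h1 h2
    rwa [show a - b + (c - d) = a + c - (b + d) by noncomm_ring] at this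
  mul' := fun {a b c d} h1 h2 => by
    show a * c - b * d ∈ I
    have h3 : a * (c - d) ∈ I := I.smul_mem a h2
    have h4 : (a - b) * d ∈ I := hI _ h1 d
    have := I.add_mem h3 h4
    rwa [show a * (c - d) + (a - b) * d = a * c - b * d by noncomm_ring] at this

end Helpers

/-- **Theorem 3.7**: an oddly-Noetherian unique factorization superdomain is local
with unique maximal ideal the canonical superideal `𝒥`, and `𝒥` is nilpotent. -/
theorem oddlyNoetherian_ufsr_superdomain_local_and_J_nilpotent
    {R : Type*} [Ring R] [Nontrivial R]
    (𝒜 : ZMod 2 → AddSubgroup R) [GradedRing 𝒜]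
    (hsc : SuperComm 𝒜) (h2 : TwoRegular R) (hodd : 𝒜 1 ≠ ⊥)
    (hON : IsOddlyNoetherian 𝒜) (hdom : IsSuperdomain 𝒜) (hufsr : IsUFSR R) :
    (∀ x : R, IsUnit x ↔ x ∉ canonicalSuperideal 𝒜) ∧
      ∃ m : ℕ, ∀ x : Fin m → R, (∀ i, x i ∈ canonicalSuperideal 𝒜) →
        (List.ofFn x).prod = 0 := by
  classical
  obtain ⟨n, z, hz, hgen⟩ := hON
  set J : Ideal R := canonicalSuperideal 𝒜 with hJdef
  have hJm : ∀ x : Fin (n+1) → R, (∀ i, x i ∈ J) → (List.ofFn x).prod = 0 :=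
    J_nilpotent_prod hsc h2 hgen hz
  have hUnot : ∀ x : R, IsUnit x → x ∉ J := by
    intro x hx hmem
    obtain ⟨u, rfl⟩ := hx
    have h1 : (1 : R) ∈ J := by
      have := J.smul_mem ((u⁻¹ : Rˣ) : R) hmem
      rwa [smul_eq_mul, Units.inv_mul] at this
    exact hdom.1 h1
  have hJnil : ∀ x ∈ J, IsNilpotent x := by
    intro x hx
    refine ⟨n+1, ?_⟩
    have := hJm (fun _ => x) (fun _ => hx)
    rwa [List.ofFn_const, List.prod_replicate] at this
  have hlift : ∀ f g : R, f * g - 1 ∈ J → g * f - 1 ∈ J → IsUnit f := by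
    intro f g hfg hgf
    have hu1 : IsUnit (f * g) := by
      have h := IsNilpotent.isUnit_one_add (hJnil _ hfg)
      rwa [show (1 : R) + (f * g - 1) = f * g by abel] at h
    have hu2 : IsUnit (g * f) := by
      have h := IsNilpotent.isUnit_one_add (hJnil _ hgf)
      rwa [show (1 : R) + (g * f - 1) = g * f by abel] at h
    obtain ⟨w1, hw1⟩ := hu1
    obtain ⟨w2, hw2⟩ := hu2
    refine SRAux.isUnit_of_left_right (a := ((w2⁻¹ : Rˣ) : R) * g) (b := g * ((w1⁻¹ : Rˣ) : R)) ?_ ?_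
    · rw [mul_assoc, ← hw2, Units.inv_mul]
    · rw [← mul_assoc, ← hw1, Units.mul_inv]
  have hJr : ∀ x ∈ J, ∀ r : R, x * r ∈ J := fun x hx r => J_mul_right hsc hx r
  let con : RingCon R := jCon J hJr
  let φ : R →+* con.Quotient := RingCon.mk' con
  have hsurj : ∀ q : con.Quotient, ∃ r : R, φ r = q := fun q => Quotient.exists_rep q
  have hphi_eq : ∀ a b : R, φ a = φ b ↔ a - b ∈ J := fun a b => RingCon.eq con
  have hphi0 : ∀ a : R, φ a = 0 ↔ a ∈ J := by
    intro a
    have h0 : (0 : con.Quotient) = φ 0 := (map_zero φ).symm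
    rw [h0, hphi_eq, sub_zero]
  have hmulcomm : ∀ a b : con.Quotient, a * b = b * a := by
    intro a b
    obtain ⟨r, rfl⟩ := hsurj a
    obtain ⟨s, rfl⟩ := hsurj b
    rw [← map_mul, ← map_mul, hphi_eq]
    obtain ⟨r0, h0, r1, h1, rfl⟩ := SRAux.decomp 𝒜 r
    have hcen : r0 * s = s * r0 := SRAux.even_comm hsc h0 s
    have hr1s : r1 * s ∈ J := J_mul_right hsc (Ideal.subset_span h1) s
    have hsr1 : s * r1 ∈ J := Ideal.mul_mem_left _ s (Ideal.subset_span h1)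
    have heq : (r0 + r1) * s - s * (r0 + r1) = r1 * s - s * r1 := by
      rw [add_mul, mul_add, hcen]; abel
    rw [heq]
    exact J.sub_mem hr1s hsr1
  letI : CommRing con.Quotient := { (inferInstance : Ring con.Quotient) with mul_comm := hmulcomm }
  have hQ10 : (1 : con.Quotient) ≠ 0 := by
    intro h
    apply hdom.1
    have : φ 1 = 0 := by rw [map_one]; exact h
    exact (hphi0 1).mp this
  letI : Nontrivial con.Quotient := ⟨1, 0, hQ10⟩
  letI : NoZeroDivisors con.Quotient := by
    constructor
    intro a b hab
    obtain ⟨r, rfl⟩ := hsurj a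
    obtain ⟨s, rfl⟩ := hsurj b
    rw [← map_mul, hphi0] at hab
    rcases hdom.2 r s hab with h | h
    · left; exact (hphi0 r).mpr h
    · right; exact (hphi0 s).mpr h
  have hQunit : ∀ r : R, IsUnit (φ r) → IsUnit r := by
    intro r hr
    obtain ⟨w, hw⟩ := hr
    obtain ⟨g, hg⟩ := hsurj ((w⁻¹ : _) : con.Quotient)
    apply hlift r g
    · refine (hphi_eq _ _).mp ?_
      rw [map_mul, map_one, ← hw, hg, Units.mul_inv]
    · refine (hphi_eq _ _).mp ?_
      rw [map_mul, map_one, ← hw, hg, Units.inv_mul]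
  -- the core claim: every normal irreducible element lies in J
  have hcore : ∀ f : R, SNormal f → SIrreducible f → f ∈ J := by
    intro f hnorm hirr
    by_contra hfJ
    have hfnu : ¬ IsUnit f := hirr.1
    have hsets : ∀ x : R, (∃ r, x = f * r) ↔ (∃ r, x = r * f) := fun x => Set.ext_iff.mp hnorm x
    have hswapL : ∀ x : R, ∃ s, f * x = s * f := fun x => (hsets (f * x)).mp ⟨x, rfl⟩
    have hswapR : ∀ x : R, ∃ s, x * f = f * s := fun x => (hsets (x * f)).mpr ⟨x, rfl⟩
    have hfpow : ∀ N : ℕ, f ^ N ∉ J := by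
      intro N
      induction N with
      | zero => simpa using hdom.1
      | succ N ih =>
        intro hmem
        rw [pow_succ] at hmem
        rcases hdom.2 _ _ hmem with h | h
        · exact ih h
        · exact hfJ h
    have hfQnu : ¬ IsUnit (φ f) := fun h => hfnu (hQunit f h)
    have hfQ0 : φ f ≠ 0 := fun h => hfJ ((hphi0 f).mp h)
    set P : ℕ → Prop := fun ℓ => ∃ x : Fin ℓ → R, (∀ i, x i ∈ J) ∧ (List.ofFn x).prod ≠ 0
      with hPdef
    have hP1 : P 1 := by
      obtain ⟨θ₀, hθ₀A, hθ₀ne⟩ : ∃ t, t ∈ 𝒜 1 ∧ t ≠ 0 := by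
        by_contra hall
        push_neg at hall
        apply hodd
        ext t
        simp only [AddSubgroup.mem_bot]
        exact ⟨fun ht => hall t ht, fun ht => ht ▸ (𝒜 1).zero_mem⟩
      exact ⟨fun _ => θ₀, fun _ => Ideal.subset_span hθ₀A, by simpa using hθ₀ne⟩
    have hPm : ¬ P (n+1) := by
      rintro ⟨x, hx, hne⟩
      exact hne (hJm x hx)
    have hkex : ∃ k, P k ∧ ¬ P (k+1) := by
      by_contra hnex
      push_neg at hnex
      have hone : ∀ i : ℕ, P (1 + i) := by
        intro i
        induction i with
        | zero => exact hP1
        | succ i ih =>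
          have := hnex (1 + i) ih
          rwa [show 1 + i + 1 = 1 + (i+1) by omega] at this
      have := hone n
      rw [show 1 + n = n + 1 by omega] at this
      exact hPm this
    obtain ⟨k, ⟨xv, hxvJ, hθne⟩, hk1⟩ := hkex
    have hk0 : k ≠ 0 := by
      rintro rfl
      exact hk1 hP1
    have hkall : ∀ x : Fin (k+1) → R, (∀ i, x i ∈ J) → (List.ofFn x).prod = 0 := by
      intro x hx
      by_contra hne
      exact hk1 ⟨x, hx, hne⟩
    set θ : R := (List.ofFn xv).prod with hθdef
    have hθJ : θ ∈ J := by
      have hne : List.ofFn xv ≠ [] := by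
        intro h
        apply hk0
        simpa using congrArg List.length h
      obtain ⟨y, L', hyL⟩ := List.exists_cons_of_ne_nil hne
      have hyJ : y ∈ J := by
        have : y ∈ List.ofFn xv := by rw [hyL]; exact List.mem_cons_self
        obtain ⟨i, rfl⟩ := List.mem_ofFn.mp this
        exact hxvJ i
      rw [hθdef, hyL, List.prod_cons]
      exact hJr y hyJ L'.prod
    have hθkill : ∀ j ∈ J, θ * j = 0 := by
      intro j hj
      have hall : ∀ i, (Fin.snoc xv j : Fin (k+1) → R) i ∈ J := by
        intro i
        refine Fin.lastCases ?_ ?_ i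
        · simpa using hj
        · intro i'; simpa using hxvJ i'
      have h0 := hkall (Fin.snoc xv j) hall
      rw [List.ofFn_succ'] at h0
      have hcast : (List.ofFn fun i : Fin k => (Fin.snoc xv j : Fin (k+1) → R) i.castSucc) = List.ofFn xv := by
        congr 1
        funext i
        simp
      rw [hcast, Fin.snoc_last, List.prod_concat] at h0
      exact h0
    have hθnu : ¬ IsUnit θ := fun h => (hUnot θ h) hθJ
    obtain ⟨dθ, fθ, hfθ, hθfact⟩ := hufsr.1 θ hθne hθnu
    set N : ℕ := dθ + 1 with hNdef
    obtain ⟨θN, hθN⟩ := pow_swap hswapR N θ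
    have hθNJ : θN ∈ J := by
      have hmem : f ^ N * θN ∈ J := by
        rw [← hθN]
        exact hJr θ hθJ _
      rcases hdom.2 _ _ hmem with h | h
      · exact absurd h (hfpow N)
      · exact h
    set h₁ : R := f ^ N + θ with hh₁
    set h₂ : R := f ^ N - θN with hh₂
    have hh₁J : h₁ ∉ J := by
      intro hmem
      apply hfpow N
      have := J.sub_mem hmem hθJ
      rwa [hh₁, add_sub_cancel_right] at this
    have hh₂J : h₂ ∉ J := by
      intro hmem
      apply hfpow N
      have := J.add_mem hmem hθNJ
      rwa [hh₂, sub_add_cancel] at this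
    have hh₁0 : h₁ ≠ 0 := fun h => hh₁J (h ▸ J.zero_mem)
    have hh₂0 : h₂ ≠ 0 := fun h => hh₂J (h ▸ J.zero_mem)
    have hφh₁ : φ h₁ = (φ f) ^ N := by
      have h : φ h₁ = φ (f ^ N) := by
        refine (hphi_eq _ _).mpr ?_
        rw [hh₁, add_sub_cancel_left]
        exact hθJ
      rw [h, map_pow]
    have hφh₂ : φ h₂ = (φ f) ^ N := by
      have h : φ h₂ = φ (f ^ N) := by
        refine (hphi_eq _ _).mpr ?_
        rw [hh₂, sub_sub_cancel_left]
        exact J.neg_mem hθNJ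
      rw [h, map_pow]
    have hNne : N ≠ 0 := by omega
    have hh₁nu : ¬ IsUnit h₁ := by
      intro h
      have h' := h.map φ
      rw [hφh₁] at h'
      exact hfQnu ((isUnit_pow_iff hNne).mp h')
    have hh₂nu : ¬ IsUnit h₂ := by
      intro h
      have h' := h.map φ
      rw [hφh₂] at h'
      exact hfQnu ((isUnit_pow_iff hNne).mp h')
    have hθθN : θ * θN = 0 := hθkill θN hθNJ
    have hprod : h₁ * h₂ = f ^ (2 * N) := by
      have e1 : h₁ * h₂ = f ^ N * f ^ N + (θ * f ^ N - f ^ N * θN) - θ * θN := by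
        rw [hh₁, hh₂]; noncomm_ring
      rw [e1, hθN, sub_self, add_zero, hθθN, sub_zero, ← pow_add, two_mul]
    have hf2nu : ¬ IsUnit (f ^ (2*N)) := by
      intro h
      have h' := h.map φ
      rw [map_pow] at h'
      exact hfQnu ((isUnit_pow_iff (by omega : 2*N ≠ 0)).mp h')
    have hf2ne : f ^ (2*N) ≠ 0 := fun h => hfpow (2*N) (h ▸ J.zero_mem)
    obtain ⟨e₁, b, hb, hbfact⟩ := hufsr.1 h₁ hh₁0 hh₁nu
    obtain ⟨e₂, c, hc, hcfact⟩ := hufsr.1 h₂ hh₂0 hh₂nu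
    set Lg : List R := List.ofFn b ++ List.ofFn c with hLg
    have hLgprod : Lg.prod = f ^ (2*N) := by
      rw [hLg, List.prod_append, ← hbfact, ← hcfact, hprod]
    have hgprop : ∀ i : Fin Lg.length, SNormal (Lg.get i) ∧ SIrreducible (Lg.get i) := by
      intro i
      have hmem : Lg.get i ∈ Lg := List.get_mem _ _
      rcases List.mem_append.mp hmem with h | h
      · obtain ⟨j, hj⟩ := List.mem_ofFn.mp h; rw [← hj]; exact hb j
      · obtain ⟨j, hj⟩ := List.mem_ofFn.mp h; rw [← hj]; exact hc j
    have hflistprod : f ^ (2*N) = (List.ofFn (fun _ : Fin (2*N) => f)).prod := by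
      rw [List.ofFn_const, List.prod_replicate]
    have hgfact : f ^ (2*N) = (List.ofFn Lg.get).prod := by
      rw [List.ofFn_get]
      exact hLgprod.symm
    obtain ⟨hlen, σ, hassoc⟩ := hufsr.2 (f ^ (2*N)) hf2ne hf2nu (2*N) Lg.length
      (fun _ => f) Lg.get (fun _ => ⟨hnorm, hirr⟩) hgprop hflistprod hgfact
    have hall : ∀ y ∈ Lg, SAssociated f y := by
      intro y hy
      obtain ⟨i, hi⟩ := List.get_of_mem hy
      have h' := hassoc (σ.symm i)
      simp only [Equiv.apply_symm_apply] at h'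
      rw [hi] at h'
      exact h'
    have hblen : (List.ofFn b).length = e₁ := List.length_ofFn
    have hQassoc : ∀ y' ∈ (List.ofFn b).map φ,
        ∃ u v : (con.Quotient)ˣ, φ f = (u : con.Quotient) * y' * (v : con.Quotient) := by
      intro y' hy'
      obtain ⟨y, hy, rfl⟩ := List.mem_map.mp hy'
      obtain ⟨u, v, huv⟩ := hall y (List.mem_append_left _ hy)
      refine ⟨Units.map φ.toMonoidHom u, Units.map φ.toMonoidHom v, ?_⟩
      rw [huv]
      simp [map_mul]
    obtain ⟨U, hU⟩ := prod_assoc_pow (φ f) ((List.ofFn b).map φ) hQassoc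
    have hUlen : ((List.ofFn b).map φ).length = e₁ := by rw [List.length_map, hblen]
    have hφprod : φ h₁ = (U : con.Quotient) * (φ f) ^ e₁ := by
      rw [hbfact]
      have hmp : φ (List.ofFn b).prod = ((List.ofFn b).map φ).prod := map_list_prod φ _
      rw [hmp, hU, hUlen]
    have he₁N : e₁ = N := by
      have key : (φ f) ^ N = (U : con.Quotient) * (φ f) ^ e₁ := by rw [← hφh₁, hφprod]
      rcases lt_trichotomy e₁ N with h | h | h
      · exfalso
        have hsplit : (φ f) ^ N = (φ f) ^ e₁ * (φ f) ^ (N - e₁) := by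
          rw [← pow_add]
          congr 1
          omega
        rw [hsplit] at key
        have key' : (φ f) ^ e₁ * (φ f) ^ (N - e₁) = (φ f) ^ e₁ * (U : con.Quotient) := by
          rw [key]; ring
        have hcan := mul_left_cancel₀ (pow_ne_zero e₁ hfQ0) key'
        apply hfQnu
        refine (isUnit_pow_iff (show N - e₁ ≠ 0 by omega)).mp ?_
        rw [hcan]
        exact U.isUnit
      · exact h
      · exfalso
        have hsplit : (φ f) ^ e₁ = (φ f) ^ N * (φ f) ^ (e₁ - N) := by
          rw [← pow_add]
          congr 1
          omega
        rw [hsplit] at key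
        have key2 : (φ f) ^ N * 1 = (φ f) ^ N * ((U : con.Quotient) * (φ f) ^ (e₁ - N)) := by
          rw [mul_one]
          nth_rewrite 1 [key]
          ring
        have hcan := mul_left_cancel₀ (pow_ne_zero N hfQ0) key2
        apply hfQnu
        refine (isUnit_pow_iff (show e₁ - N ≠ 0 by omega)).mp ?_
        exact IsUnit.of_mul_eq_one (U : con.Quotient) (by rw [mul_comm]; exact hcan.symm)
    have hbRf : ∀ y ∈ List.ofFn b, ∃ β : R, y = β * f := by
      intro y hy
      obtain ⟨u, v, huv⟩ := hall y (List.mem_append_left _ hy)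
      have hy' : y = ((u⁻¹ : Rˣ) : R) * f * ((v⁻¹ : Rˣ) : R) := by
        rw [huv]
        simp [mul_assoc]
      obtain ⟨s, hs⟩ := hswapL ((v⁻¹ : Rˣ) : R)
      refine ⟨((u⁻¹ : Rˣ) : R) * s, ?_⟩
      rw [hy', mul_assoc, hs, ← mul_assoc]
    obtain ⟨cR, hcR⟩ := prod_right_f hswapL (List.ofFn b) hbRf
    simp only [List.length_ofFn] at hcR
    rw [show f ^ e₁ = f ^ N by rw [he₁N]] at hcR
    have hθeq : θ = (cR - 1) * f ^ N := by
      have hθh : θ = h₁ - f ^ N := by rw [hh₁]; abel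
      rw [hθh, hbfact, hcR, sub_mul, one_mul]
    have hcR0 : cR - 1 ≠ 0 := by
      intro h
      rw [h, zero_mul] at hθeq
      exact hθne hθeq
    have hcRJ : cR - 1 ∈ J := by
      have hmem : (cR - 1) * f ^ N ∈ J := hθeq ▸ hθJ
      rcases hdom.2 _ _ hmem with h | h
      · exact h
      · exact absurd h (hfpow N)
    have hcRnu : ¬ IsUnit (cR - 1) := fun h => (hUnot _ h) hcRJ
    obtain ⟨q, dl, hdl, hdlfact⟩ := hufsr.1 (cR - 1) hcR0 hcRnu
    set Lθ : List R := List.ofFn dl ++ List.ofFn (fun _ : Fin N => f) with hLθ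
    have hLθprod : θ = Lθ.prod := by
      rw [hLθ, List.prod_append, ← hdlfact, List.ofFn_const, List.prod_replicate, hθeq]
    have hLθprop : ∀ i : Fin Lθ.length, SNormal (Lθ.get i) ∧ SIrreducible (Lθ.get i) := by
      intro i
      have hmem : Lθ.get i ∈ Lθ := List.get_mem _ _
      rcases List.mem_append.mp hmem with h | h
      · obtain ⟨j, hj⟩ := List.mem_ofFn.mp h; rw [← hj]; exact hdl j
      · obtain ⟨j, hj⟩ := List.mem_ofFn.mp h; rw [← hj]; exact ⟨hnorm, hirr⟩
    have hgfact2 : θ = (List.ofFn Lθ.get).prod := by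
      rw [List.ofFn_get]
      exact hLθprod
    obtain ⟨hlen2, -, -⟩ := hufsr.2 θ hθne hθnu dθ Lθ.length fθ Lθ.get hfθ hLθprop hθfact hgfact2
    have hLθlen : Lθ.length = q + N := by rw [hLθ, List.length_append, List.length_ofFn, List.length_ofFn]
    omega
  refine ⟨?_, n+1, hJm⟩
  intro x
  constructor
  · exact fun h => hUnot x h
  · intro hxJ
    by_contra hxnu
    have hx0 : x ≠ 0 := fun h => hxJ (h ▸ J.zero_mem)
    obtain ⟨d, fl, hfl, hxf⟩ := hufsr.1 x hx0 hxnu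
    rcases d with _ | d'
    · rw [show (List.ofFn fl) = [] from List.ofFn_zero] at hxf
      exact hxnu (by rw [hxf, List.prod_nil]; exact isUnit_one)
    · have h0J : fl 0 ∈ J := hcore (fl 0) (hfl 0).1 (hfl 0).2
      apply hxJ
      rw [hxf, List.ofFn_succ, List.prod_cons]
      exact hJr (fl 0) h0J _
end
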